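/- Let m, n, d be integers with 2 ≤ m ≤ n ≤ d, let ζ ∈ k be a primitive d-th root of unity, and let t₁, t₂ be natural numbers with t₁ ≤ m − 1 and t₂ ≤ m − 1; assume d + t₁ ≥ m + n. If P ∈ k[x_1,…,x_m,y_1,…,y_n] is homogeneous of total degree d + t₁ − m − n and satisfies ζ^{n−t₂} · σ_ζ(P) = P, then P = 0. -/

import Mathlib

/-!
Rescaling the variables by `c` multiplies the coefficient of `x^ν` by `∏ c_i^{ν_i}`, so `σ_ζ`
multiplies it by `ζ^w`, with `w` the `y`-degree of `ν`. A nonzero coefficient of an eigenvector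
with `ζ^{n-t₂} σ_ζ(P) = P` therefore forces `d ∣ n - t₂ + w`. But `w ≤ deg P = d + t₁ - m - n`
and `t₁, t₂ < m ≤ n`, so `0 < n - t₂ + w ≤ d + t₁ - m < d`.
-/

open MvPolynomial

noncomputable def sigmaZeta (k : Type*) [Field k] (m n : ℕ) (ζ : k) :
    MvPolynomial (Fin m ⊕ Fin n) k →ₐ[k] MvPolynomial (Fin m ⊕ Fin n) k :=
  aeval (Sum.elim (fun i => X (Sum.inl i)) (fun j => ζ • X (Sum.inr j)))

section ScaleVariables

variable {R σ : Type*} [CommSemiring R]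

theorem aeval_smul_X_monomial (c : σ → R) (ν : σ →₀ ℕ) (a : R) :
    aeval (fun i => c i • X i) (monomial ν a) = (ν.prod fun i e => c i ^ e) • monomial ν a := by
  simp_rw [aeval_monomial, smul_eq_C_mul, mul_pow, Finsupp.prod_mul, map_finsuppProd, map_pow,
    monomial_eq, algebraMap_eq]
  ring

theorem coeff_aeval_smul_X (c : σ → R) (P : MvPolynomial σ R) (ν : σ →₀ ℕ) :
    coeff ν (aeval (fun i => c i • X i) P) = (ν.prod fun i e => c i ^ e) * coeff ν P := by
  classical
  induction P using MvPolynomial.induction_on' with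
  | monomial μ a =>
    rw [aeval_smul_X_monomial, coeff_smul, coeff_monomial, smul_eq_mul]
    split_ifs with h
    · rw [h]
    · rw [mul_zero, mul_zero]
  | add p q hp hq => rw [map_add, coeff_add, coeff_add, hp, hq, mul_add]

end ScaleVariables

theorem Finsupp.sum_inr_le_degree {α β : Type*} [Fintype α] [Fintype β] (ν : α ⊕ β →₀ ℕ) :
    ∑ j, ν (Sum.inr j) ≤ ν.degree := by
  rw [Finsupp.degree_eq_sum, Fintype.sum_sum_type]
  exact Nat.le_add_left _ _

section SigmaZeta

variable {k : Type*} [Field k] {m n : ℕ}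

theorem sigmaZeta_eq_aeval_smul_X (ζ : k) :
    sigmaZeta k m n ζ = aeval fun i => Sum.elim (fun _ => 1) (fun _ => ζ) i • X i := by
  unfold sigmaZeta
  congr 1
  funext i
  cases i <;> simp

theorem coeff_sigmaZeta (ζ : k) (P : MvPolynomial (Fin m ⊕ Fin n) k) (ν : Fin m ⊕ Fin n →₀ ℕ) :
    coeff ν (sigmaZeta k m n ζ P) = ζ ^ (∑ j, ν (Sum.inr j)) * coeff ν P := by
  rw [sigmaZeta_eq_aeval_smul_X, coeff_aeval_smul_X,
    Finsupp.prod_fintype _ _ (fun _ => pow_zero _), Fintype.prod_sum_type]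
  simp [Finset.prod_pow_eq_pow_sum]

theorem pow_add_sum_inr_eq_one_of_coeff_ne_zero {ζ : k} {s : ℕ}
    {P : MvPolynomial (Fin m ⊕ Fin n) k} (heig : ζ ^ s • sigmaZeta k m n ζ P = P)
    {ν : Fin m ⊕ Fin n →₀ ℕ} (hν : coeff ν P ≠ 0) :
    ζ ^ (s + ∑ j, ν (Sum.inr j)) = 1 := by
  have h := congrArg (coeff ν) heig
  rw [coeff_smul, coeff_sigmaZeta, smul_eq_mul, ← mul_assoc, ← pow_add] at h
  exact mul_right_cancel₀ hν (h.trans (one_mul _).symm)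

end SigmaZeta

theorem semiorthogonality_A3_vanishing_general (k : Type*) [Field k] (m n d : ℕ)
    (hm : 2 ≤ m) (hmn : m ≤ n)
    (t₁ t₂ : ℕ) (ht₁ : t₁ ≤ m - 1) (ht₂ : t₂ ≤ m - 1) (hd : m + n ≤ d + t₁)
    (ζ : k) (hζ : IsPrimitiveRoot ζ d)
    (P : MvPolynomial (Fin m ⊕ Fin n) k)
    (hhom : P.IsHomogeneous (d + t₁ - m - n))
    (heig : ζ ^ (n - t₂) • sigmaZeta k m n ζ P = P) :
    P = 0 := by
  ext ν
  by_contra hν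
  have hdeg : ν.degree = d + t₁ - m - n := by
    rw [Finsupp.degree_eq_weight_one]
    exact hhom hν
  have hdvd : d ∣ n - t₂ + ∑ j, ν (Sum.inr j) :=
    (hζ.pow_eq_one_iff_dvd _).mp (pow_add_sum_inr_eq_one_of_coeff_ne_zero heig hν)
  have hle := Finsupp.sum_inr_le_degree ν
  exact Nat.not_dvd_of_pos_of_lt (by omega) (by omega) hdvd

/-- For `2 ≤ m ≤ n ≤ d`, `t₁, t₂ ≤ m - 1` and `d + t₁ ≥ m + n`: a homogeneous polynomial of
degree `d + t₁ - m - n` satisfying `ζ^{n-t₂} · σ_ζ(P) = P` is zero.  This is the vanishing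
proving the semi-orthogonality of the exceptional collection `A₃`. -/
theorem semiorthogonality_A3_vanishing (k : Type*) [Field k] (m n d : ℕ)
    (hm : 2 ≤ m) (hmn : m ≤ n) (hnd : n ≤ d)
    (t₁ t₂ : ℕ) (ht₁ : t₁ ≤ m - 1) (ht₂ : t₂ ≤ m - 1) (hd : m + n ≤ d + t₁)
    (ζ : k) (hζ : IsPrimitiveRoot ζ d)
    (P : MvPolynomial (Fin m ⊕ Fin n) k)
    (hhom : P.IsHomogeneous (d + t₁ - m - n))
    (heig : ζ ^ (n - t₂) • sigmaZeta k m n ζ P = P) :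
    P = 0 :=
  semiorthogonality_A3_vanishing_general k m n d hm hmn t₁ t₂ ht₁ ht₂ hd ζ hζ P hhom heig
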